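/- arXiv:2204.12613 — 2 statements merged into one kernel-verified Lean document; each statement's English description precedes it below -/
import Mathlib

section
/- Let A be a graded algebra with square-zero differential D decomposed by resolution degree as D = D₋₁ + D₀ + ⋯ with D₋₁ acyclic via a homotopy H satisfying (HD₋₁ + D₋₁H)f = f for f of positive total degree. If Df = 0 and f is cohomologous to an element g of form-degree k whose resolution degree is at least n > 0, then f is cohomologous to an element g' of form-degree k whose resolution degree is at least n+1. -/
/-!  A complete bigraded module: `V p q` is the component of form degree `p` and
resolution degree `q`; an element of form degree `p` is a formal series
`f : ∀ q, V p q` over resolution degree (so arbitrary sums over resolution degree are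
well-defined componentwise).  The differential `D` of form degree `1` decomposes as
`D = D₋₁ + D₀ + D₁ + ⋯` where `Dₖ` raises resolution degree by `k`. -/

section Bigraded

variable (R : Type*) [CommRing R]
variable (V : ℕ → ℕ → Type*) [∀ p q, AddCommGroup (V p q)] [∀ p q, Module R (V p q)]
variable (Dneg : ∀ p q, V p (q + 1) →ₗ[R] V (p + 1) q)
variable (Dk : ∀ (k p q : ℕ), V p q →ₗ[R] V (p + 1) (q + k))

/-- Transport along an equality of resolution degrees. -/
def cstV {p a b : ℕ} (h : a = b) (x : V p a) : V p b := h ▸ x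

/-- Transport along an equality of form degrees. -/
def cstF {q a b : ℕ} (h : a = b) (x : V a q) : V b q := h ▸ x

/-- The total operator `D = D₋₁ + Σ_{k ≥ 0} Dₖ` acting on elements of form degree `p`
(the sum is finite in each resolution degree, so `D` is well-defined on formal series). -/
noncomputable def Dtot (p : ℕ) (f : ∀ q, V p q) : ∀ q, V (p + 1) q :=
  fun q => Dneg p q (f (q + 1)) +
    ∑ i ∈ (Finset.range (q + 1)).attach,
      cstV V (by have := Finset.mem_range.mp i.2; omega : i.1 + (q - i.1) = q)
        (Dk (q - i.1) p i.1 (f i.1))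

/-- `f` and `g` (of form degree `p`) are cohomologous: they differ by a `D`-coboundary. -/
def Cohomologous (p : ℕ) (f g : ∀ q, V p q) : Prop :=
  f = g ∨ ∃ (p' : ℕ) (h : p' + 1 = p) (y : ∀ q, V p' q),
    ∀ q, f q - g q = cstF V h (Dtot R V Dneg Dk p' y q)

end Bigraded

section Aux

variable (R : Type*) [CommRing R]
variable (V : ℕ → ℕ → Type*) [∀ p q, AddCommGroup (V p q)] [∀ p q, Module R (V p q)]
variable (Dneg : ∀ p q, V p (q + 1) →ₗ[R] V (p + 1) q)
variable (Dk : ∀ (k p q : ℕ), V p q →ₗ[R] V (p + 1) (q + k))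

lemma cstV_zero {p a b : ℕ} (h : a = b) : cstV V h (0 : V p a) = 0 := by cases h; rfl

lemma cstV_sub {p a b : ℕ} (h : a = b) (x y : V p a) :
    cstV V h (x - y) = cstV V h x - cstV V h y := by cases h; rfl

lemma cstV_add {p a b : ℕ} (h : a = b) (x y : V p a) :
    cstV V h (x + y) = cstV V h x + cstV V h y := by cases h; rfl

lemma cstF_self {q a : ℕ} (h : a = a) (x : V a q) : cstF V h x = x := rfl

lemma Dtot_sub (p : ℕ) (a b : ∀ q, V p q) (q : ℕ) :
    Dtot R V Dneg Dk p (fun q => a q - b q) q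
      = Dtot R V Dneg Dk p a q - Dtot R V Dneg Dk p b q := by
  simp only [Dtot, map_sub, cstV_sub, Finset.sum_sub_distrib]
  abel

lemma Dtot_add (p : ℕ) (a b : ∀ q, V p q) (q : ℕ) :
    Dtot R V Dneg Dk p (fun q => a q + b q) q
      = Dtot R V Dneg Dk p a q + Dtot R V Dneg Dk p b q := by
  simp only [Dtot, map_add, cstV_add, Finset.sum_add_distrib]
  abel

lemma Dtot_low (p : ℕ) (a : ∀ q, V p q) (q : ℕ) (ha : ∀ i, i < q + 1 → a i = 0) :
    Dtot R V Dneg Dk p a q = Dneg p q (a (q + 1)) := by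
  simp only [Dtot]
  rw [Finset.sum_eq_zero, add_zero]
  intro i _
  rw [ha i.1 (Finset.mem_range.mp i.2), map_zero, cstV_zero]

end Aux

/-- Let `D = D₋₁ + D₀ + D₁ + ⋯` be a square-zero differential of form degree `1` on a
complete bigraded algebra, with `D₋₁` acyclic via a homotopy `H` (raising resolution
degree by `1` and lowering form degree by `1`) satisfying `(HD₋₁ + D₋₁H) = id` on
components of positive total degree.  If `Df = 0` and `f` is cohomologous to `g` of the
same form degree with resolution degree at least `n > 0` (all components of `g` below
resolution degree `n` vanish), then `f` is cohomologous to some `g'` of the same form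
degree with resolution degree at least `n + 1`. -/
theorem cocycle_cohomologous_to_higher_resolution_degree
    (R : Type*) [CommRing R]
    (V : ℕ → ℕ → Type*) [∀ p q, AddCommGroup (V p q)] [∀ p q, Module R (V p q)]
    (Dneg : ∀ p q, V p (q + 1) →ₗ[R] V (p + 1) q)
    (Dk : ∀ (k p q : ℕ), V p q →ₗ[R] V (p + 1) (q + k))
    (hD2 : ∀ (p : ℕ) (f : ∀ q, V p q),
      Dtot R V Dneg Dk (p + 1) (Dtot R V Dneg Dk p f) = 0)
    (H : ∀ p q, V (p + 1) q →ₗ[R] V p (q + 1))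
    (hH1 : ∀ (p q : ℕ) (x : V (p + 1) (q + 1)),
      H (p + 1) q (Dneg (p + 1) q x) + Dneg p (q + 1) (H p (q + 1) x) = x)
    (hH2 : ∀ (p : ℕ) (x : V (p + 1) 0), Dneg p 0 (H p 0 x) = x)
    (hH3 : ∀ (q : ℕ) (x : V 0 (q + 1)), H 0 q (Dneg 0 q x) = x)
    (k n : ℕ) (hn : 0 < n)
    (f g : ∀ q, V k q)
    (hf : Dtot R V Dneg Dk k f = 0)
    (hfg : Cohomologous R V Dneg Dk k f g)
    (hg : ∀ q, q < n → g q = 0) :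
    ∃ g' : ∀ q, V k q,
      Cohomologous R V Dneg Dk k f g' ∧ ∀ q, q < n + 1 → g' q = 0 := by
  obtain ⟨m, rfl⟩ : ∃ m, n = m + 1 := ⟨n - 1, by omega⟩
  -- g is also a cocycle
  have hDg : Dtot R V Dneg Dk k g = 0 := by
    rcases hfg with rfl | ⟨p', rfl, y, hy⟩
    · exact hf
    · have hgy : g = fun q => f q - Dtot R V Dneg Dk p' y q := by
        funext q
        have h := hy q
        rw [cstF_self] at h
        rw [← h, sub_sub_cancel]
      funext q
      rw [hgy, Dtot_sub, congrFun hf q, congrFun (hD2 p' y) q, Pi.zero_apply, sub_zero]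
  -- the lowest component of Dg = 0 gives D₋₁ (g (m+1)) = 0
  have h1 : Dneg k m (g (m + 1)) = 0 := by
    have h0 := congrFun hDg m
    rwa [Dtot_low R V Dneg Dk k g m (fun i hi => hg i hi), Pi.zero_apply] at h0
  cases k with
  | zero =>
    -- in form degree 0, g (m+1) itself vanishes
    have h2 : g (m + 1) = 0 := by
      have := hH3 m (g (m + 1))
      rwa [h1, map_zero, eq_comm] at this
    refine ⟨g, hfg, fun q hq => ?_⟩
    rcases Nat.lt_succ_iff_lt_or_eq.mp hq with hq' | rfl
    · exact hg q hq'
    · exact h2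
  | succ p =>
    -- correct g by the coboundary of H (g (m+1))
    set h : ∀ q, V p q :=
      Function.update (fun q => (0 : V p q)) (m + 2) (H p (m + 1) (g (m + 1))) with hh
    have hhne : ∀ i, i ≠ m + 2 → h i = 0 := fun i hi => Function.update_of_ne hi _ _
    refine ⟨fun q => g q - Dtot R V Dneg Dk p h q, ?_, ?_⟩
    · rcases hfg with hfg' | ⟨p', hp, y, hy⟩
      · refine Or.inr ⟨p, rfl, h, fun q => ?_⟩
        show f q - (g q - Dtot R V Dneg Dk p h q) = Dtot R V Dneg Dk p h q
        rw [hfg', sub_sub_cancel]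
      · obtain rfl : p = p' := (Nat.succ_injective hp).symm
        refine Or.inr ⟨p, rfl, (fun q => y q + h q), fun q => ?_⟩
        show f q - (g q - Dtot R V Dneg Dk p h q)
          = Dtot R V Dneg Dk p (fun q => y q + h q) q
        rw [Dtot_add]
        have h5 := hy q
        rw [cstF_self] at h5
        rw [← h5]
        abel
    · intro q hq
      rcases Nat.lt_succ_iff_lt_or_eq.mp hq with hq' | rfl
      · show g q - Dtot R V Dneg Dk p h q = 0
        rw [Dtot_low R V Dneg Dk p h q (fun i hi => hhne i (by omega)),
          hhne (q + 1) (by omega), map_zero, sub_zero]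
        exact hg q hq'
      · show g (m + 1) - Dtot R V Dneg Dk p h (m + 1) = 0
        rw [Dtot_low R V Dneg Dk p h (m + 1) (fun i hi => hhne i (by omega))]
        have h3 : h (m + 1 + 1) = H p (m + 1) (g (m + 1)) := Function.update_self _ _ _
        rw [h3]
        have h4 := hH1 p m (g (m + 1))
        rw [h1, map_zero, zero_add] at h4
        rw [h4, sub_self]
end

section
/- Uniqueness of the Grothendieck connection from the formal exponential map (local version): let D = Σₐ dz^a ∂/∂z^a + Σ_{a,b} dz^a C^b_a(z,ε) ∂/∂ε^b be a derivation on C^∞(U) ⊗ Λ(dz) ⊗ ℝ[[ε]] and let e^*(z^a) = z^a + ε^b e₁{}_b^a(z) + (higher order in ε). If D(e^*(z^a)) = 0 for all a and the matrix e₁{}_b^a(z) is invertible for all z, then the coefficients Cₙ of the expansion C = C₋₁ + C₀ ε + ⋯ in powers of ε are uniquely determined recursively by the coefficients eₙ, and conversely the eₙ for n ≥ 2 are uniquely determined recursively by the Cₙ and e₁. In particular, at lowest order C₋₁{}_c^b(z) e₁{}_b^a(z) = −δ^a_c. -/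
open scoped Manifold

abbrev Ed (d : ℕ) := EuclideanSpace ℝ (Fin d)

/-- The ring `C^∞(ℝᵈ)` of smooth functions. -/
abbrev SmoothFn (d : ℕ) := ContMDiffMap (𝓘(ℝ, Ed d)) (𝓘(ℝ, ℝ)) (Ed d) ℝ (⊤ : ℕ∞)

/-- The algebra `A = C^∞(ℝᵈ) ⊗ Λ(dz¹,…,dzᵈ) ⊗ ℝ[[ε¹,…,εᵈ]]`: an element is a family,
indexed by exterior monomials `dz^S` (`S ⊆ {1,…,d}`, written with increasing indices),
of formal power series in `ε` with smooth coefficients. -/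
abbrev GrAlg (d : ℕ) := Finset (Fin d) → MvPowerSeries (Fin d) (SmoothFn d)

/-- Koszul sign picked up by moving `dzᵃ` from the left across the (increasingly ordered)
monomial `dz^S`, for `a ∉ S`. -/
def ins (d : ℕ) (a : Fin d) (S : Finset (Fin d)) : ℤ :=
  (-1) ^ (S.filter (fun b => b < a)).card

/-- The derivation `∂/∂εᵃ` on formal power series. -/
noncomputable def pe (d : ℕ) (a : Fin d) (g : MvPowerSeries (Fin d) (SmoothFn d)) :
    MvPowerSeries (Fin d) (SmoothFn d) :=
  fun m => (m a + 1) • g (m + Finsupp.single a 1)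

/-- The partial derivative `∂/∂zᵃ` on smooth functions. -/
noncomputable def pd (d : ℕ) (i : Fin d) (f : SmoothFn d) : SmoothFn d :=
  ⟨fun z => fderiv ℝ f z (EuclideanSpace.single i 1), by
    have hf : ContDiff ℝ ((⊤ : ℕ∞) : WithTop ℕ∞) (⇑f) := contMDiff_iff_contDiff.mp f.contMDiff
    have h1 : ContDiff ℝ ((⊤ : ℕ∞) : WithTop ℕ∞) (fderiv ℝ (⇑f)) := by
      apply hf.fderiv_right
      exact_mod_cast le_top
    exact contMDiff_iff_contDiff.mpr (h1.clm_apply contDiff_const)⟩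

/-- `∂/∂zᵃ` applied coefficientwise to a formal power series with smooth coefficients. -/
noncomputable def pz (d : ℕ) (i : Fin d) (g : MvPowerSeries (Fin d) (SmoothFn d)) :
    MvPowerSeries (Fin d) (SmoothFn d) :=
  fun m => pd d i (g m)

/-- The coordinate function `zᵃ` as a smooth function. -/
noncomputable def zfun (d : ℕ) (a : Fin d) : SmoothFn d :=
  ⟨fun z => z a, contMDiff_iff_contDiff.mpr (by exact (EuclideanSpace.proj a : Ed d →L[ℝ] ℝ).contDiff)⟩

/-- The condition `D(e^*(zᵃ)) = 0` for the odd operator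
`D = Σ_b dz^b ∂/∂z^b + Σ_{b,c} dz^b C^c_b(z, ε) ∂/∂ε^c` applied to
`e^*(zᵃ) = E a ∈ C^∞(U)[[ε]]`; since the `dz^b` are independent, it reads
`∂_{z^b}(E a) + Σ_c C^c_b · ∂_{ε^c}(E a) = 0` for all `a, b`. -/
def GrothCond (d : ℕ) (Cm : Fin d → Fin d → MvPowerSeries (Fin d) (SmoothFn d))
    (E : Fin d → MvPowerSeries (Fin d) (SmoothFn d)) : Prop :=
  ∀ a b : Fin d, pz d b (E a) + ∑ c : Fin d, Cm c b * pe d c (E a) = 0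

/-! The constant term in `ε` of `D e^*(zᵃ) = 0` reads `δᵃ_b + C₋₁{}^c_b e₁{}_c^a = 0`, so `C₋₁`
is invertible with inverse `-e₁`. The connection is unique because the matrix `∂_{εᶜ} e^*(zᵃ)`
is invertible over the power series ring (its constant term is `e₁`) and
`C · ∂_ε e^* = -∂_z e^*`. The exponential is unique because the equation is linear in `e^*`:
if the difference `F` of two solutions has order `> n`, the degree-`n` part of the equation
reduces to `C₋₁ · (∂_ε F)ₙ = 0`, so invertibility of `C₋₁` raises the order of `F` by one. -/

open MvPowerSeries

namespace MvPowerSeries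

variable {σ R : Type*}

theorem coeff_mul_eq_constantCoeff_mul_of_degree_le_order [CommSemiring R]
    {f g : MvPowerSeries σ R} {m : σ →₀ ℕ} (h : (m.degree : ℕ∞) ≤ g.order) :
    coeff m (f * g) = constantCoeff f * coeff m g := by
  classical
  rw [coeff_mul, Finset.sum_eq_single (0, m), coeff_zero_eq_constantCoeff_apply]
  · rintro ⟨p, q⟩ hpq hne
    rw [Finset.HasAntidiagonal.mem_antidiagonal] at hpq
    dsimp only at hpq ⊢
    have hp : p ≠ 0 := by
      rintro rfl
      exact hne (by rw [← hpq, zero_add])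
    have hq : q.degree < m.degree := by
      rw [← hpq, map_add]
      have := (Finsupp.degree_eq_zero_iff p).not.mpr hp
      omega
    rw [coeff_of_lt_order (lt_of_lt_of_le (by exact_mod_cast hq) h), mul_zero]
  · simp

theorem _root_.Matrix.isUnit_of_isUnit_map_constantCoeff {ι : Type*} [Fintype ι] [DecidableEq ι]
    [CommRing R] {M : Matrix ι ι (MvPowerSeries σ R)} (h : IsUnit (M.map constantCoeff)) :
    IsUnit M := by
  rw [Matrix.isUnit_iff_isUnit_det, isUnit_iff_constantCoeff, RingHom.map_det]
  exact (Matrix.isUnit_iff_isUnit_det _).mp h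

end MvPowerSeries

theorem Finsupp.exists_eq_add_single_of_degree_eq_succ {σ : Type*} {q : σ →₀ ℕ} {n : ℕ}
    (h : q.degree = n + 1) : ∃ m c, m.degree = n ∧ q = m + Finsupp.single c 1 := by
  obtain ⟨c, hc⟩ := Finsupp.ne_iff.mp (fun h0 : q = 0 => by simp [h0] at h)
  have hle : Finsupp.single c 1 ≤ q := Finsupp.single_le_iff.mpr (Nat.one_le_iff_ne_zero.mpr hc)
  refine ⟨q - Finsupp.single c 1, c, ?_, (tsub_add_cancel_of_le hle).symm⟩
  have := congrArg Finsupp.degree (tsub_add_cancel_of_le hle)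
  rw [map_add, Finsupp.degree_single] at this
  omega

variable {d : ℕ}

theorem pd_sub (i : Fin d) (f g : SmoothFn d) : pd d i (f - g) = pd d i f - pd d i g := by
  have hf : Differentiable ℝ f := (contMDiff_iff_contDiff.mp f.contMDiff).differentiable (by simp)
  have hg : Differentiable ℝ g := (contMDiff_iff_contDiff.mp g.contMDiff).differentiable (by simp)
  ext z
  change fderiv ℝ (f - g : SmoothFn d) z _ = fderiv ℝ f z _ - fderiv ℝ g z _
  rw [ContMDiffMap.coe_sub, fderiv_sub (hf z) (hg z)]
  rfl

theorem pd_zero (i : Fin d) : pd d i 0 = 0 := by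
  simpa using pd_sub i 0 0

theorem pd_zfun (a b : Fin d) : pd d b (zfun d a) = if a = b then 1 else 0 := by
  ext z
  change fderiv ℝ (EuclideanSpace.proj (𝕜 := ℝ) a) z (EuclideanSpace.single b 1) = _
  rw [ContinuousLinearMap.fderiv]
  by_cases h : a = b <;> simp [h]

theorem pz_sub (i : Fin d) (F G : MvPowerSeries (Fin d) (SmoothFn d)) :
    pz d i (F - G) = pz d i F - pz d i G :=
  funext fun m => pd_sub i (F m) (G m)

theorem pe_sub (c : Fin d) (F G : MvPowerSeries (Fin d) (SmoothFn d)) :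
    pe d c (F - G) = pe d c F - pe d c G :=
  funext fun m => smul_sub (m c + 1) (F _) (G _)

theorem coeff_pe (c : Fin d) (m : Fin d →₀ ℕ) (F : MvPowerSeries (Fin d) (SmoothFn d)) :
    coeff m (pe d c F) = (m c + 1) • coeff (m + Finsupp.single c 1) F :=
  rfl

theorem constantCoeff_pe (c : Fin d) (F : MvPowerSeries (Fin d) (SmoothFn d)) :
    constantCoeff (pe d c F) = coeff (Finsupp.single c 1) F := by
  rw [← coeff_zero_eq_constantCoeff_apply, coeff_pe, zero_add]
  simp

theorem le_order_pe {F : MvPowerSeries (Fin d) (SmoothFn d)} {n : ℕ}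
    (h : ((n + 1 : ℕ) : ℕ∞) ≤ F.order) (c : Fin d) : (n : ℕ∞) ≤ (pe d c F).order := by
  refine nat_le_order fun q hq => ?_
  have hlt : ((q + Finsupp.single c 1).degree : ℕ∞) < F.order := by
    rw [map_add, Finsupp.degree_single]
    exact lt_of_lt_of_le (by exact_mod_cast Nat.succ_lt_succ hq) h
  rw [coeff_pe, coeff_of_lt_order hlt, smul_zero]

/-- The `dz^b`-component of `D F`. -/
noncomputable def grothendieckOp (d : ℕ)
    (Cm : Fin d → Fin d → MvPowerSeries (Fin d) (SmoothFn d)) (b : Fin d)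
    (F : MvPowerSeries (Fin d) (SmoothFn d)) : MvPowerSeries (Fin d) (SmoothFn d) :=
  pz d b F + ∑ c : Fin d, Cm c b * pe d c F

section grothendieckOp

variable {Cm : Fin d → Fin d → MvPowerSeries (Fin d) (SmoothFn d)}

theorem grothCond_iff {E : Fin d → MvPowerSeries (Fin d) (SmoothFn d)} :
    GrothCond d Cm E ↔ ∀ a b, grothendieckOp d Cm b (E a) = 0 :=
  Iff.rfl

theorem grothendieckOp_sub (b : Fin d) (F G : MvPowerSeries (Fin d) (SmoothFn d)) :
    grothendieckOp d Cm b (F - G) = grothendieckOp d Cm b F - grothendieckOp d Cm b G := by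
  simp only [grothendieckOp, pz_sub, pe_sub, mul_sub, Finset.sum_sub_distrib]
  abel

theorem grothendieckOp_sub_grothendieckOp
    (Cm' : Fin d → Fin d → MvPowerSeries (Fin d) (SmoothFn d))
    (b : Fin d) (F : MvPowerSeries (Fin d) (SmoothFn d)) :
    grothendieckOp d Cm b F - grothendieckOp d Cm' b F =
      ∑ c : Fin d, (Cm c b - Cm' c b) * pe d c F := by
  simp only [grothendieckOp, sub_mul, Finset.sum_sub_distrib]
  abel

theorem constantCoeff_grothendieckOp (b : Fin d) (F : MvPowerSeries (Fin d) (SmoothFn d)) :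
    constantCoeff (grothendieckOp d Cm b F) =
      pd d b (constantCoeff F) +
        ∑ c : Fin d, constantCoeff (Cm c b) * coeff (Finsupp.single c 1) F := by
  simp only [grothendieckOp, map_add, map_sum, map_mul, constantCoeff_pe]
  rfl

theorem coeff_grothendieckOp_of_le_order (b : Fin d) {F : MvPowerSeries (Fin d) (SmoothFn d)}
    {m : Fin d →₀ ℕ} (h : ((m.degree + 1 : ℕ) : ℕ∞) ≤ F.order) :
    coeff m (grothendieckOp d Cm b F) =
      ∑ c : Fin d, constantCoeff (Cm c b) * ((m c + 1) • coeff (m + Finsupp.single c 1) F) := by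
  have hm : coeff m F = 0 :=
    coeff_of_lt_order (lt_of_lt_of_le (by exact_mod_cast Nat.lt_succ_self _) h)
  rw [grothendieckOp, map_add, map_sum]
  change pd d b (coeff m F) + _ = _
  rw [hm, pd_zero, zero_add]
  refine Finset.sum_congr rfl fun c _ => ?_
  rw [coeff_mul_eq_constantCoeff_mul_of_degree_le_order (le_order_pe h c), coeff_pe]

theorem coeff_add_single_eq_zero_of_grothendieckOp_eq_zero
    (hB : IsUnit (Matrix.of fun c b => constantCoeff (Cm c b)))
    {F : MvPowerSeries (Fin d) (SmoothFn d)} (hF : ∀ b, grothendieckOp d Cm b F = 0)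
    {m : Fin d →₀ ℕ} (h : ((m.degree + 1 : ℕ) : ℕ∞) ≤ F.order) (c : Fin d) :
    coeff (m + Finsupp.single c 1) F = 0 := by
  set v : Fin d → SmoothFn d := fun c => (m c + 1) • coeff (m + Finsupp.single c 1) F
  have hv : Matrix.vecMul v (Matrix.of fun c b => constantCoeff (Cm c b)) = 0 := by
    funext b
    calc Matrix.vecMul v (Matrix.of fun c b => constantCoeff (Cm c b)) b
        = coeff m (grothendieckOp d Cm b F) := by
          rw [coeff_grothendieckOp_of_le_order b h]
          simp only [Matrix.vecMul, dotProduct, Matrix.of_apply, v, mul_comm]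
      _ = 0 := by rw [hF b, map_zero]
  have hvc : (m c + 1) • coeff (m + Finsupp.single c 1) F = 0 :=
    congrFun (Matrix.vecMul_injective_of_isUnit hB (hv.trans (Matrix.zero_vecMul _).symm)) c
  rw [← Nat.cast_smul_eq_nsmul ℝ] at hvc
  exact (smul_eq_zero.mp hvc).resolve_left (by positivity)

end grothendieckOp

theorem eq_zero_of_grothendieckOp_eq_zero
    {Cm : Fin d → Fin d → MvPowerSeries (Fin d) (SmoothFn d)}
    (hB : IsUnit (Matrix.of fun c b => constantCoeff (Cm c b)))
    {F : MvPowerSeries (Fin d) (SmoothFn d)} (hF0 : constantCoeff F = 0)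
    (hF : ∀ b, grothendieckOp d Cm b F = 0) : F = 0 := by
  have hord : ∀ n : ℕ, ((n + 1 : ℕ) : ℕ∞) ≤ F.order := by
    intro n
    induction n with
    | zero => exact_mod_cast one_le_order_iff_constCoeff_eq_zero.mpr hF0
    | succ n ih =>
      refine nat_le_order fun q hq => ?_
      rcases Nat.lt_succ_iff_lt_or_eq.mp hq with hlt | heq
      · exact coeff_of_lt_order (lt_of_lt_of_le (by exact_mod_cast hlt) ih)
      · obtain ⟨m, c, rfl, rfl⟩ := Finsupp.exists_eq_add_single_of_degree_eq_succ heq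
        exact coeff_add_single_eq_zero_of_grothendieckOp_eq_zero hB hF ih c
  exact order_eq_top_iff.mp <| ENat.eq_top_iff_forall_ge.mpr fun n =>
    le_trans (by exact_mod_cast n.le_succ) (hord n)

namespace GrothCond

variable {Cm : Fin d → Fin d → MvPowerSeries (Fin d) (SmoothFn d)}
  {E : Fin d → MvPowerSeries (Fin d) (SmoothFn d)}

theorem sum_constantCoeff_mul_coeff_single (hC : GrothCond d Cm E)
    (hE0 : ∀ a, constantCoeff (E a) = zfun d a) (a b : Fin d) :
    ∑ c : Fin d, constantCoeff (Cm c b) * coeff (Finsupp.single c 1) (E a) =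
      -(if a = b then 1 else 0) := by
  have h := congrArg constantCoeff (grothCond_iff.mp hC a b)
  rw [constantCoeff_grothendieckOp, hE0, pd_zfun, map_zero] at h
  exact eq_neg_of_add_eq_zero_right h

theorem isUnit_constantCoeff (hC : GrothCond d Cm E)
    (hE0 : ∀ a, constantCoeff (E a) = zfun d a) :
    IsUnit (Matrix.of fun c b => constantCoeff (Cm c b)) := by
  rw [Matrix.isUnit_iff_isUnit_det]
  refine Matrix.isUnit_det_of_left_inverse
    (B := -(Matrix.of fun c a => coeff (Finsupp.single c 1) (E a)).transpose) ?_
  ext a b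
  simp [Matrix.mul_apply, mul_comm, hC.sum_constantCoeff_mul_coeff_single hE0 a b, Matrix.one_apply]

theorem connection_unique (hC : GrothCond d Cm E)
    (hE1 : IsUnit (Matrix.of fun b a => coeff (Finsupp.single b 1) (E a)))
    {Cm' : Fin d → Fin d → MvPowerSeries (Fin d) (SmoothFn d)} (hC' : GrothCond d Cm' E) :
    Cm = Cm' := by
  have hM : IsUnit (Matrix.of fun c a => pe d c (E a)) := by
    refine Matrix.isUnit_of_isUnit_map_constantCoeff ?_
    convert hE1 using 2
    ext c a
    simp [constantCoeff_pe]
  funext c b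
  have hrow : Matrix.vecMul (fun c => Cm c b - Cm' c b) (Matrix.of fun c a => pe d c (E a)) =
      Matrix.vecMul 0 (Matrix.of fun c a => pe d c (E a)) := by
    funext a
    calc _ = grothendieckOp d Cm b (E a) - grothendieckOp d Cm' b (E a) :=
          (grothendieckOp_sub_grothendieckOp Cm' b (E a)).symm
      _ = _ := by
          rw [grothCond_iff.mp hC a b, grothCond_iff.mp hC' a b, sub_self, Matrix.zero_vecMul]
          rfl
  exact sub_eq_zero.mp (congrFun (Matrix.vecMul_injective_of_isUnit hM hrow) c)

theorem exponential_unique (hC : GrothCond d Cm E) (hE0 : ∀ a, constantCoeff (E a) = zfun d a)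
    {E' : Fin d → MvPowerSeries (Fin d) (SmoothFn d)} (hC' : GrothCond d Cm E')
    (hE0' : ∀ a, constantCoeff (E' a) = zfun d a) : E = E' := by
  funext a
  refine sub_eq_zero.mp (eq_zero_of_grothendieckOp_eq_zero (hC.isUnit_constantCoeff hE0) ?_ ?_)
  · rw [map_sub, hE0, hE0', sub_self]
  · intro b
    rw [grothendieckOp_sub, grothCond_iff.mp hC a b, grothCond_iff.mp hC' a b, sub_self]

end GrothCond

/-- Uniqueness of the Grothendieck connection from the formal exponential map (local
version): suppose `e^*(zᵃ) = E a` has constant term (in `ε`) the coordinate function `zᵃ`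
and invertible linear coefficient matrix `e₁`, and the connection coefficients `C`
satisfy `D(e^*(zᵃ)) = 0`.  Then:
(1) at lowest order, `C₋₁{}_c^b e₁{}_b^a = −δ^a_c` (with `C₋₁ = C|_{ε=0}`);
(2) the coefficients of `C` are uniquely determined by `E` (any two solutions agree);
(3) conversely, the higher coefficients `eₙ`, `n ≥ 2`, are uniquely determined by `C`
    together with `e₀ = z` and `e₁` (any two solutions with the same constant and linear
    coefficients agree). -/
theorem grothendieck_connection_unique_from_exponential
    (d : ℕ)
    (E E' : Fin d → MvPowerSeries (Fin d) (SmoothFn d))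
    (Cm Cm' : Fin d → Fin d → MvPowerSeries (Fin d) (SmoothFn d))
    (hE0 : ∀ a, MvPowerSeries.constantCoeff (E a) = zfun d a)
    (hE1inv : IsUnit (Matrix.of fun b a =>
      MvPowerSeries.coeff (Finsupp.single b 1) (E a)))
    (hC : GrothCond d Cm E) :
    (∀ a b : Fin d,
      ∑ c : Fin d, MvPowerSeries.constantCoeff (Cm c b) *
        MvPowerSeries.coeff (Finsupp.single c 1) (E a) =
      -(if a = b then 1 else 0)) ∧
    (GrothCond d Cm' E → Cm = Cm') ∧
    ((∀ a, MvPowerSeries.constantCoeff (E' a) = zfun d a) →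
     (∀ a b, MvPowerSeries.coeff (Finsupp.single b 1) (E' a) =
        MvPowerSeries.coeff (Finsupp.single b 1) (E a)) →
     GrothCond d Cm E' → E = E') :=
  ⟨hC.sum_constantCoeff_mul_coeff_single hE0, hC.connection_unique hE1inv,
    fun hE0' _ hC' => hC.exponential_unique hE0 hC' hE0'⟩
end
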